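/- Let T ⊆ (0,∞) be nonempty. If T* has an accumulation point c ∈ [1,∞), then R_T ≤ c². -/

import Mathlib

open Set Filter Topology Pointwise

noncomputable section

/-- `T* = T ∪ T⁻¹ ∪ {1}` -/
def Tstar (T : Set ℝ) : Set ℝ := T ∪ (fun t => t⁻¹) '' T ∪ {1}

/-- `T_{γ₋,γ₊,n}`: products of `n` elements of `T*` whose partial products stay in `[γ₋,γ₊]`. -/
def TProdN (T : Set ℝ) (γm γp : ℝ) (n : ℕ) : Set ℝ :=
  {x | ∃ t : Fin n → ℝ, (∀ i, t i ∈ Tstar T) ∧ x = ∏ i, t i ∧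
    ∀ k : Fin n, (∏ i ∈ Finset.univ.filter (· ≤ k), t i) ∈ Icc γm γp}

/-- `T_{γ₋,γ₊} = ⋃_{n ≥ 1} T_{γ₋,γ₊,n}` -/
def TProd (T : Set ℝ) (γm γp : ℝ) : Set ℝ := ⋃ n ∈ {n : ℕ | 1 ≤ n}, TProdN T γm γp n

/-- `T_{γ₋,γ₊}` is dense in `[γ₋,γ₊]`. -/
def DenseInIcc (T : Set ℝ) (γm γp : ℝ) : Prop := Icc γm γp ⊆ closure (TProd T γm γp)

/-- The limit ratio `R_T ∈ [1,∞]` (with `inf ∅ = ∞`). -/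
def limitRatio (T : Set ℝ) : ENNReal :=
  sInf {r : ENNReal | ∃ γm γp : ℝ, γm ∈ Ioo (0:ℝ) 1 ∧ 1 < γp ∧ DenseInIcc T γm γp ∧
    r = ENNReal.ofReal (γp / γm)}

/-- sup of a set of reals, valued in `[0,∞]`. -/
def eSup (I : Set ℝ) : ENNReal := ⨆ x ∈ I, ENNReal.ofReal x

/-- inf of a set of reals, valued in `[0,∞]` (`= ∞` for `I = ∅`). -/
def eInf (I : Set ℝ) : ENNReal := ⨅ x ∈ I, ENNReal.ofReal x

lemma tstar_one (T : Set ℝ) : (1:ℝ) ∈ Tstar T := Or.inr rfl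

lemma tstar_inv {T : Set ℝ} {x : ℝ} (hx : x ∈ Tstar T) : x⁻¹ ∈ Tstar T := by
  rcases hx with (h | ⟨y, hy, rfl⟩) | h
  · exact Or.inl (Or.inr ⟨x, h, rfl⟩)
  · rw [inv_inv]; exact Or.inl (Or.inl hy)
  · simp only [mem_singleton_iff] at h; subst h; simpa using tstar_one T

lemma tstar_pos {T : Set ℝ} (hT0 : T ⊆ Ioi 0) {x : ℝ} (hx : x ∈ Tstar T) : 0 < x := by
  rcases hx with (h | ⟨y, hy, rfl⟩) | h
  · exact hT0 h
  · exact inv_pos.mpr (hT0 hy)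
  · simp only [mem_singleton_iff] at h; subst h; norm_num

lemma mem_one {T : Set ℝ} {γm γp x : ℝ} (hx : x ∈ Tstar T) (h : x ∈ Icc γm γp) :
    x ∈ TProdN T γm γp 1 := by
  refine ⟨fun _ => x, fun _ => hx, by simp, fun k => ?_⟩
  have : (Finset.univ.filter (· ≤ k)) = Finset.univ := by
    ext i; simp [Subsingleton.elim i k]
  rw [this]; simpa using h

lemma mem_succ {T : Set ℝ} {γm γp x ℓ : ℝ} {n : ℕ} (hx : x ∈ TProdN T γm γp n)
    (hℓ : ℓ ∈ Tstar T) (h : x * ℓ ∈ Icc γm γp) : x * ℓ ∈ TProdN T γm γp (n+1) := by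
  obtain ⟨t, ht, hxe, hpart⟩ := hx
  refine ⟨Fin.snoc t ℓ, ?_, ?_, ?_⟩
  · intro i
    induction i using Fin.lastCases with
    | last => simpa using hℓ
    | cast j => simpa using ht j
  · rw [Fin.prod_univ_castSucc]
    simp [hxe]
  · intro k
    induction k using Fin.lastCases with
    | last =>
      have he : (Finset.univ.filter (· ≤ Fin.last n)) = Finset.univ := by
        ext i; simp [Fin.le_last]
      rw [he, Fin.prod_univ_castSucc]
      simpa [hxe] using h
    | cast j =>
      have he : (Finset.univ.filter (· ≤ Fin.castSucc j) : Finset (Fin (n+1)))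
          = Finset.map Fin.castSuccEmb (Finset.univ.filter (· ≤ j)) := by
        ext i
        simp only [Finset.mem_filter, Finset.mem_univ, true_and, Finset.mem_map]
        have hemb : ∀ i' : Fin n, Fin.castSuccEmb i' = Fin.castSucc i' := fun _ => rfl
        constructor
        · intro hij
          have hij' : i.val ≤ j.val := hij
          have hlt : i.val < n := lt_of_le_of_lt hij' j.isLt
          refine ⟨⟨i.val, hlt⟩, ?_, ?_⟩
          · exact hij'
          · rw [hemb]; exact Fin.ext rfl
        · rintro ⟨i', hi', rfl⟩
          rw [hemb]
          exact Fin.castSucc_le_castSucc_iff.mpr hi'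
      rw [he, Finset.prod_map]
      have : ∀ i' ∈ Finset.univ.filter (· ≤ j), (Fin.snoc t ℓ : Fin (n+1) → ℝ) (Fin.castSuccEmb i') = t i' := by
        intro i' _
        exact Fin.snoc_castSucc (α := fun _ => ℝ) ℓ t i' 
      rw [Finset.prod_congr rfl this]
      exact hpart j

lemma step_up {T : Set ℝ} {s t γp : ℝ} (hs : s ∈ Tstar T) (ht : t ∈ Tstar T)
    (h1s : 1 ≤ s) (hst : s < t) (htp : t ≤ γp) {p : ℝ} (hp1 : γp⁻¹ ≤ p)
    (hp2 : p * (t/s) ≤ γp) :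
    ∃ ℓ₁ ℓ₂ : ℝ, ℓ₁ ∈ Tstar T ∧ ℓ₂ ∈ Tstar T ∧ ℓ₁ * ℓ₂ = t/s ∧ p * ℓ₁ ∈ Icc γp⁻¹ γp := by
  have hs0 : 0 < s := lt_of_lt_of_le one_pos h1s
  have ht0 : 0 < t := hs0.trans hst
  have h1t : 1 ≤ t := h1s.trans hst.le
  have hγp1 : 1 < γp := lt_of_lt_of_le (lt_of_le_of_lt h1s hst) htp
  have hγp0 : 0 < γp := one_pos.trans hγp1
  have hp0 : 0 < p := lt_of_lt_of_le (inv_pos.mpr hγp0) hp1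
  have hq1 : 1 < t / s := (one_lt_div hs0).mpr hst
  rcases le_or_gt p 1 with hple | hpgt
  · refine ⟨t, s⁻¹, ht, tstar_inv hs, by field_simp, ?_, ?_⟩
    · exact le_trans hp1 (le_mul_of_one_le_right hp0.le h1t)
    · exact (mul_le_of_le_one_left ht0.le hple).trans htp
  · refine ⟨s⁻¹, t, tstar_inv hs, ht, by field_simp [mul_comm], ?_, ?_⟩
    · have h1 : γp⁻¹ ≤ t⁻¹ := inv_anti₀ ht0 htp
      have h2 : t⁻¹ ≤ s⁻¹ := inv_anti₀ hs0 hst.le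
      calc γp⁻¹ ≤ s⁻¹ := h1.trans h2
        _ ≤ p * s⁻¹ := le_mul_of_one_le_left (inv_pos.mpr hs0).le hpgt.le
    · have : p * s⁻¹ ≤ p * (t/s) := by
        apply mul_le_mul_of_nonneg_left _ hp0.le
        rw [div_eq_mul_inv]
        exact le_mul_of_one_le_left (inv_pos.mpr hs0).le h1t
      exact this.trans hp2

lemma step_down {T : Set ℝ} {s t γp : ℝ} (hs : s ∈ Tstar T) (ht : t ∈ Tstar T)
    (h1s : 1 ≤ s) (hst : s < t) (htp : t ≤ γp) {p : ℝ} (hp1 : γp⁻¹ * (t/s) ≤ p)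
    (hp2 : p ≤ γp) :
    ∃ ℓ₁ ℓ₂ : ℝ, ℓ₁ ∈ Tstar T ∧ ℓ₂ ∈ Tstar T ∧ ℓ₁ * ℓ₂ = s/t ∧ p * ℓ₁ ∈ Icc γp⁻¹ γp := by
  have hs0 : 0 < s := lt_of_lt_of_le one_pos h1s
  have ht0 : 0 < t := hs0.trans hst
  have h1t : 1 ≤ t := h1s.trans hst.le
  have hγp1 : 1 < γp := lt_of_lt_of_le (lt_of_le_of_lt h1s hst) htp
  have hγp0 : 0 < γp := one_pos.trans hγp1
  have hq1 : 1 < t / s := (one_lt_div hs0).mpr hst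
  have hp0 : 0 < p :=
    lt_of_lt_of_le (mul_pos (inv_pos.mpr hγp0) (lt_trans one_pos hq1)) hp1
  rcases le_or_gt 1 p with hpge | hplt
  · refine ⟨t⁻¹, s, tstar_inv ht, hs, by field_simp [mul_comm], ?_, ?_⟩
    · have h1 : γp⁻¹ ≤ t⁻¹ := inv_anti₀ ht0 htp
      calc γp⁻¹ ≤ t⁻¹ := h1
        _ ≤ p * t⁻¹ := le_mul_of_one_le_left (inv_pos.mpr ht0).le hpge
    · have : p * t⁻¹ ≤ p * 1 := by
        apply mul_le_mul_of_nonneg_left _ hp0.le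
        exact inv_le_one_of_one_le₀ h1t
      rw [mul_one] at this
      exact this.trans hp2
  · refine ⟨s, t⁻¹, hs, tstar_inv ht, by field_simp, ?_, ?_⟩
    · have h1 : γp⁻¹ * (t/s) * s ≤ p * s := mul_le_mul_of_nonneg_right hp1 hs0.le
      rw [mul_assoc, div_mul_cancel₀ _ hs0.ne'] at h1
      calc γp⁻¹ ≤ γp⁻¹ * t := le_mul_of_one_le_right (inv_pos.mpr hγp0).le h1t
        _ ≤ p * s := h1
    · have : p * s ≤ 1 * s := mul_le_mul_of_nonneg_right hplt.le hs0.le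
      rw [one_mul] at this
      exact this.trans (hst.le.trans htp)

lemma exists_st {T : Set ℝ} (hT0 : T ⊆ Ioi 0) {c γp : ℝ} (hc : 1 ≤ c)
    (hacc : AccPt c (Filter.principal (Tstar T))) (hγp : c < γp) {ε : ℝ} (hε : 0 < ε) :
    ∃ s t : ℝ, s ∈ Tstar T ∧ t ∈ Tstar T ∧ 1 ≤ s ∧ s < t ∧ t ≤ γp ∧ t/s < 1+ε := by
  have hγp1 : 1 < γp := lt_of_le_of_lt hc hγp
  have hγp0 : 0 < γp := lt_trans one_pos hγp1
  have hinv : γp * γp⁻¹ = 1 := mul_inv_cancel₀ hγp0.ne'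
  have hγpi1 : γp⁻¹ < 1 := by nlinarith
  have hγpi0 : 0 < γp⁻¹ := inv_pos.mpr hγp0
  have hA : ∀ η > (0:ℝ), ∃ u, u ∈ Tstar T ∧ u ≠ c ∧ |u - c| < η := by
    intro η hη
    obtain ⟨y, ⟨hy1, hy2⟩, hy3⟩ := accPt_iff_nhds.mp hacc
      (Metric.ball c η) (Metric.ball_mem_nhds c hη)
    exact ⟨y, hy2, hy3, by simpa [Real.dist_eq] using hy1⟩
  rcases eq_or_lt_of_le hc with hc1 | hc1
  · -- c = 1 : take s = 1, t = max u u⁻¹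
    set η := min (ε/(1+ε)) (1 - γp⁻¹) with hη_def
    have hηa : η ≤ ε/(1+ε) := min_le_left _ _
    have hηb : η ≤ 1 - γp⁻¹ := min_le_right _ _
    have hηε : η * (1+ε) ≤ ε := by
      rw [← le_div_iff₀ (by linarith)]; exact hηa
    have hη0 : 0 < η := lt_min (by positivity) (by linarith)
    have hη1 : η < 1 := by
      have : ε/(1+ε) < 1 := by rw [div_lt_one (by linarith)]; linarith
      exact lt_of_le_of_lt hηa this
    obtain ⟨u, hu, hune, hud⟩ := hA η hη0
    rw [← hc1] at hune hud
    have hu0 : 0 < u := tstar_pos hT0 hu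
    have hub : u < 1 + η := by cases' abs_lt.mp hud with h1 h2; linarith
    have hlb : 1 - η < u := by cases' abs_lt.mp hud with h1 h2; linarith
    have huinv : u * u⁻¹ = 1 := mul_inv_cancel₀ hu0.ne'
    have hui0 : 0 < u⁻¹ := inv_pos.mpr hu0
    refine ⟨1, max u u⁻¹, tstar_one T, ?_, le_refl 1, ?_, ?_, ?_⟩
    · rcases le_total u u⁻¹ with h | h
      · rw [max_eq_right h]; exact tstar_inv hu
      · rw [max_eq_left h]; exact hu
    · rcases lt_or_gt_of_ne hune with h | h
      · have : 1 < u⁻¹ := by nlinarith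
        exact lt_max_of_lt_right this
      · exact lt_max_of_lt_left h
    · apply max_le
      · nlinarith
      · nlinarith
    · rw [div_one]
      apply max_lt
      · nlinarith
      · nlinarith
  · -- 1 < c : two points of T* near c
    set η := min (min (c-1) (γp-c)) (ε/2) with hη_def
    have hη0 : 0 < η := lt_min (lt_min (by linarith) (by linarith)) (by linarith)
    have hη1 : η ≤ c - 1 := le_trans (min_le_left _ _) (min_le_left _ _)
    have hη2 : η ≤ γp - c := le_trans (min_le_left _ _) (min_le_right _ _)
    have hη3 : η ≤ ε/2 := min_le_right _ _
    obtain ⟨u₁, hu₁, hune₁, hud₁⟩ := hA η hη0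
    have habs : 0 < |u₁ - c| := abs_pos.mpr (sub_ne_zero.mpr hune₁)
    obtain ⟨u₂, hu₂, hune₂, hud₂⟩ := hA (min η |u₁ - c|) (lt_min hη0 habs)
    have hud₂η : |u₂ - c| < η := lt_of_lt_of_le hud₂ (min_le_left _ _)
    have hne : u₂ ≠ u₁ := by
      intro h
      rw [h] at hud₂
      exact absurd (lt_of_lt_of_le hud₂ (min_le_right _ _)) (lt_irrefl _)
    have h1a := abs_lt.mp hud₁
    have h2a := abs_lt.mp hud₂η
    refine ⟨min u₁ u₂, max u₁ u₂, ?_, ?_, ?_, ?_, ?_, ?_⟩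
    · rcases le_total u₁ u₂ with h | h
      · rw [min_eq_left h]; exact hu₁
      · rw [min_eq_right h]; exact hu₂
    · rcases le_total u₁ u₂ with h | h
      · rw [max_eq_right h]; exact hu₂
      · rw [max_eq_left h]; exact hu₁
    · have : 1 ≤ c - η := by linarith
      apply le_min <;> cases' h1a with a b <;> cases' h2a with a2 b2 <;> linarith
    · exact min_lt_max.mpr (Ne.symm hne)
    · apply max_le <;> cases' h1a with a b <;> cases' h2a with a2 b2 <;> linarith
    · have hs1 : 1 ≤ min u₁ u₂ := by
        apply le_min <;> cases' h1a with a b <;> cases' h2a with a2 b2 <;> linarith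
      have hs0 : 0 < min u₁ u₂ := lt_of_lt_of_le one_pos hs1
      have hts : max u₁ u₂ - min u₁ u₂ < ε := by
        have := max_sub_min_eq_abs u₁ u₂
        have habs2 : |u₁ - u₂| ≤ |u₁ - c| + |u₂ - c| := by
          calc |u₁ - u₂| = |(u₁ - c) + (c - u₂)| := by ring_nf
            _ ≤ |u₁ - c| + |c - u₂| := abs_add_le _ _
            _ = |u₁ - c| + |u₂ - c| := by rw [abs_sub_comm c u₂]
        rw [this, abs_sub_comm]
        linarith
      rw [div_lt_iff₀ hs0]
      nlinarith [min_le_max (a := u₁) (b := u₂)]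

lemma reach_up {T : Set ℝ} {s t γp : ℝ} (hs : s ∈ Tstar T) (ht : t ∈ Tstar T)
    (h1s : 1 ≤ s) (hst : s < t) (htp : t ≤ γp) :
    ∀ k : ℕ, (t/s)^k ≤ γp → ∃ n, 1 ≤ n ∧ (t/s)^k ∈ TProdN T γp⁻¹ γp n := by
  have hs0 : 0 < s := lt_of_lt_of_le one_pos h1s
  have hγp1 : 1 < γp := lt_of_lt_of_le (lt_of_le_of_lt h1s hst) htp
  have hγp0 : 0 < γp := one_pos.trans hγp1
  have hγpi1 : γp⁻¹ < 1 := by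
    rw [inv_lt_one_iff₀]; right; exact hγp1
  have hq1 : 1 < t / s := (one_lt_div hs0).mpr hst
  intro k
  induction k with
  | zero =>
    intro _
    refine ⟨1, le_refl 1, ?_⟩
    rw [pow_zero]
    exact mem_one (tstar_one T) ⟨hγpi1.le, hγp1.le⟩
  | succ k ih =>
    intro h
    have hk1 : (1:ℝ) ≤ (t/s)^k := one_le_pow₀ hq1.le
    have hkk : (t/s)^k ≤ (t/s)^(k+1) :=
      pow_le_pow_right₀ (le_of_lt hq1) (Nat.le_succ k)
    obtain ⟨n, hn, hmem⟩ := ih (hkk.trans h)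
    have hpow : (t/s)^k * (t/s) = (t/s)^(k+1) := (pow_succ (t/s) k).symm
    obtain ⟨ℓ₁, ℓ₂, hℓ₁, hℓ₂, hprod, hicc⟩ :=
      step_up hs ht h1s hst htp (p := (t/s)^k)
        (le_trans hγpi1.le hk1) (by rw [hpow]; exact h)
    have m1 := mem_succ hmem hℓ₁ hicc
    have m2 : (t/s)^k * ℓ₁ * ℓ₂ ∈ TProdN T γp⁻¹ γp (n+1+1) := by
      apply mem_succ m1 hℓ₂
      rw [mul_assoc, hprod, hpow]
      constructor
      · exact le_trans hγpi1.le (one_le_pow₀ hq1.le)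
      · exact h
    refine ⟨n+2, by omega, ?_⟩
    have : (t/s)^(k+1) = (t/s)^k * ℓ₁ * ℓ₂ := by rw [mul_assoc, hprod, hpow]
    rw [this]
    exact m2

lemma reach_down {T : Set ℝ} {s t γp : ℝ} (hs : s ∈ Tstar T) (ht : t ∈ Tstar T)
    (h1s : 1 ≤ s) (hst : s < t) (htp : t ≤ γp) :
    ∀ k : ℕ, γp⁻¹ ≤ ((t/s)^k)⁻¹ → ∃ n, 1 ≤ n ∧ ((t/s)^k)⁻¹ ∈ TProdN T γp⁻¹ γp n := by
  have hs0 : 0 < s := lt_of_lt_of_le one_pos h1s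
  have hγp1 : 1 < γp := lt_of_lt_of_le (lt_of_le_of_lt h1s hst) htp
  have hγp0 : 0 < γp := one_pos.trans hγp1
  have hγpi1 : γp⁻¹ < 1 := by
    rw [inv_lt_one_iff₀]; right; exact hγp1
  have hq1 : 1 < t / s := (one_lt_div hs0).mpr hst
  have hq0 : 0 < t / s := lt_trans one_pos hq1
  intro k
  induction k with
  | zero =>
    intro _
    refine ⟨1, le_refl 1, ?_⟩
    rw [pow_zero, inv_one]
    exact mem_one (tstar_one T) ⟨hγpi1.le, hγp1.le⟩
  | succ k ih =>
    intro h
    have hqk0 : 0 < (t/s)^k := pow_pos hq0 k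
    have hqk10 : 0 < (t/s)^(k+1) := pow_pos hq0 (k+1)
    have hk1 : (1:ℝ) ≤ (t/s)^k := one_le_pow₀ hq1.le
    have hinvle : ((t/s)^k)⁻¹ ≤ 1 := inv_le_one_of_one_le₀ hk1
    have hstep : γp⁻¹ ≤ ((t/s)^k)⁻¹ := by
      apply le_trans h
      apply inv_anti₀ hqk0
      exact pow_le_pow_right₀ hq1.le (Nat.le_succ k)
    obtain ⟨n, hn, hmem⟩ := ih hstep
    have hp1 : γp⁻¹ * (t/s) ≤ ((t/s)^k)⁻¹ := by
      have h2 : γp⁻¹ * (t/s) ≤ ((t/s)^(k+1))⁻¹ * (t/s) :=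
        mul_le_mul_of_nonneg_right h hq0.le
      have h3 : ((t/s)^(k+1))⁻¹ * (t/s) = ((t/s)^k)⁻¹ := by
        rw [pow_succ, mul_inv, mul_assoc, inv_mul_cancel₀ hq0.ne', mul_one]
      rwa [h3] at h2
    obtain ⟨ℓ₁, ℓ₂, hℓ₁, hℓ₂, hprod, hicc⟩ :=
      step_down hs ht h1s hst htp (p := ((t/s)^k)⁻¹) hp1 (hinvle.trans hγp1.le)
    have m1 := mem_succ hmem hℓ₁ hicc
    have hfin : ((t/s)^k)⁻¹ * ℓ₁ * ℓ₂ = ((t/s)^(k+1))⁻¹ := by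
      rw [mul_assoc, hprod, pow_succ, mul_inv, inv_div]
    have m2 : ((t/s)^k)⁻¹ * ℓ₁ * ℓ₂ ∈ TProdN T γp⁻¹ γp (n+1+1) := by
      apply mem_succ m1 hℓ₂
      rw [hfin]
      constructor
      · exact h
      · exact le_trans (inv_le_one_of_one_le₀ (one_le_pow₀ hq1.le)) hγp1.le
    refine ⟨n+2, by omega, ?_⟩
    rw [← hfin]
    exact m2

lemma dense_main {T : Set ℝ} (hT0 : T ⊆ Ioi 0) {c γp : ℝ} (hc : 1 ≤ c)
    (hacc : AccPt c (Filter.principal (Tstar T))) (hγp : c < γp) :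
    Icc γp⁻¹ γp ⊆ closure (TProd T γp⁻¹ γp) := by
  have hγp1 : 1 < γp := lt_of_le_of_lt hc hγp
  have hγp0 : 0 < γp := lt_trans one_pos hγp1
  have hγpi0 : 0 < γp⁻¹ := inv_pos.mpr hγp0
  intro x hx
  rw [Metric.mem_closure_iff]
  intro δ hδ
  have hε : 0 < δ/γp := by positivity
  obtain ⟨s, t, hs, ht, h1s, hst, htp, hqlt⟩ := exists_st hT0 hc hacc hγp hε
  have hs0 : 0 < s := lt_of_lt_of_le one_pos h1s
  set q := t/s with hq_def
  have hq1 : 1 < q := (one_lt_div hs0).mpr hst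
  have hq0 : 0 < q := lt_trans one_pos hq1
  have hx0 : 0 < x := lt_of_lt_of_le hγpi0 hx.1
  rcases le_or_gt 1 x with hx1 | hx1
  · -- x ≥ 1 : approximate from below by q^k
    have hex : ∃ N, x < q^N := pow_unbounded_of_one_lt x hq1
    set M := Nat.find hex with hM_def
    have hM : x < q^M := Nat.find_spec hex
    have hM0 : M ≠ 0 := by
      intro h0
      rw [h0, pow_zero] at hM
      linarith
    obtain ⟨k, hMk⟩ : ∃ k, M = k + 1 := ⟨M - 1, (Nat.succ_pred_eq_of_ne_zero hM0).symm⟩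
    have hk1 : q^k ≤ x := by
      by_contra hcon
      push_neg at hcon
      exact Nat.find_min hex (by omega) hcon
    have hqk_le : q^k ≤ γp := le_trans hk1 hx.2
    obtain ⟨n, hn, hmem⟩ := reach_up hs ht h1s hst htp k hqk_le
    refine ⟨q^k, ?_, ?_⟩
    · exact mem_biUnion (show n ∈ {n : ℕ | 1 ≤ n} from hn) hmem
    · rw [Real.dist_eq, abs_of_nonneg (by linarith)]
      have hxk : x < q^(k+1) := by rw [← hMk]; exact hM
      have hqk0 : 0 < q^k := pow_pos hq0 k
      have hss : q^(k+1) = q^k * q := pow_succ q k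
      have h1 : x - q^k < q^k * (q-1) := by nlinarith
      have h2 : q^k*(q-1) ≤ γp*(q-1) := mul_le_mul_of_nonneg_right hqk_le (by linarith)
      have h3 : γp*(q-1) < γp*(δ/γp) := mul_lt_mul_of_pos_left (by linarith) hγp0
      have h4 : γp*(δ/γp) = δ := by field_simp
      linarith
  · -- x < 1 : approximate from above by q^{-k}
    have hex : ∃ N, 1 < x * q^N := by
      obtain ⟨N, hN⟩ := pow_unbounded_of_one_lt x⁻¹ hq1
      refine ⟨N, ?_⟩
      have := mul_lt_mul_of_pos_left hN hx0
      rwa [mul_inv_cancel₀ hx0.ne'] at this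
    set M := Nat.find hex with hM_def
    have hM : 1 < x * q^M := Nat.find_spec hex
    have hM0 : M ≠ 0 := by
      intro h0
      rw [h0, pow_zero, mul_one] at hM
      linarith
    obtain ⟨k, hMk⟩ : ∃ k, M = k + 1 := ⟨M - 1, (Nat.succ_pred_eq_of_ne_zero hM0).symm⟩
    have hk1 : x * q^k ≤ 1 := by
      by_contra hcon
      push_neg at hcon
      exact Nat.find_min hex (by omega) hcon
    have hqk0 : 0 < q^k := pow_pos hq0 k
    have hxle : x ≤ (q^k)⁻¹ := by
      have : x ≤ 1/q^k := (le_div_iff₀ hqk0).mpr (by linarith)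
      rwa [one_div] at this
    have hylo : γp⁻¹ ≤ (q^k)⁻¹ := le_trans hx.1 hxle
    obtain ⟨n, hn, hmem⟩ := reach_down hs ht h1s hst htp k hylo
    refine ⟨(q^k)⁻¹, ?_, ?_⟩
    · exact mem_biUnion (show n ∈ {n : ℕ | 1 ≤ n} from hn) hmem
    · have hyub : (q^k)⁻¹ < x * q := by
        have h5 : 1 < x * q * q^k := by
          have : x * q^(k+1) = x * q * q^k := by rw [pow_succ]; ring
          rw [hMk, this] at hM
          exact hM
        have : 1/q^k < x * q := (div_lt_iff₀ hqk0).mpr (by linarith)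
        rwa [one_div] at this
      rw [Real.dist_eq, abs_of_nonpos (by linarith)]
      have h6 : δ/γp ≤ δ := by
        rw [div_le_iff₀ hγp0]
        nlinarith
      nlinarith

theorem stmt9 (T : Set ℝ) (hT : T.Nonempty) (hT0 : T ⊆ Ioi 0)
    (c : ℝ) (hc : 1 ≤ c) (hacc : AccPt c (Filter.principal (Tstar T))) :
    limitRatio T ≤ ENNReal.ofReal (c ^ 2) := by
  by_contra hcon
  push_neg at hcon
  obtain ⟨r, hr0, hr1, hr2⟩ := ENNReal.lt_iff_exists_real_btwn.mp hcon
  have hc0 : 0 < c := lt_of_lt_of_le one_pos hc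
  have hc2r : c^2 < r := by
    have := (ENNReal.ofReal_lt_ofReal_iff_of_nonneg (by positivity)).mp hr1
    exact this
  have hcr : c < Real.sqrt r := by
    have h1 : Real.sqrt (c^2) < Real.sqrt r := Real.sqrt_lt_sqrt (by positivity) hc2r
    rwa [Real.sqrt_sq hc0.le] at h1
  set γp := (c + Real.sqrt r)/2 with hγp_def
  have hγpc : c < γp := by rw [hγp_def]; linarith
  have hγpr : γp < Real.sqrt r := by rw [hγp_def]; linarith
  have hγp1 : 1 < γp := lt_of_le_of_lt hc hγpc
  have hγp0 : 0 < γp := lt_trans one_pos hγp1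
  have hdense : DenseInIcc T γp⁻¹ γp := dense_main hT0 hc hacc hγpc
  have hmem : ENNReal.ofReal (γp / γp⁻¹) ∈
      {r : ENNReal | ∃ γm γp' : ℝ, γm ∈ Ioo (0:ℝ) 1 ∧ 1 < γp' ∧ DenseInIcc T γm γp' ∧
        r = ENNReal.ofReal (γp' / γm)} :=
    ⟨γp⁻¹, γp, ⟨inv_pos.mpr hγp0, inv_lt_one_of_one_lt₀ hγp1⟩, hγp1, hdense, rfl⟩
  have h1 : limitRatio T ≤ ENNReal.ofReal (γp / γp⁻¹) := sInf_le hmem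
  have h2 : γp / γp⁻¹ = γp^2 := by
    field_simp
  have h3 : γp^2 < r := by
    have := Real.sq_sqrt hr0
    nlinarith
  have h4 : ENNReal.ofReal (γp / γp⁻¹) ≤ ENNReal.ofReal r := by
    rw [h2]
    exact ENNReal.ofReal_le_ofReal h3.le
  exact lt_irrefl _ (lt_of_le_of_lt (h1.trans h4) hr2)
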